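/- arXiv:1611.04248 — 2 statements merged into one kernel-verified Lean document; each statement's English description precedes it below -/
import Mathlib

section
/- Let S and R be real random variables on a common probability space with P(R > 0) = 1, let 0 < δ < 1/2, and let ε, η ≥ 0. If sup_{x∈ℝ} |P(S < x) − Φ(x)| ≤ ε and P(|R − 1| ≥ δ) ≤ η, then sup_{x∈ℝ} |P(S/R < x) − Φ(x)| ≤ ε + 2δ/√(2πe) + 2η. -/
open MeasureTheory Filter Topology

/-- The standard normal cumulative distribution function
`Φ(x) = ∫_{-∞}^x (2π)^{-1/2} e^{-t²/2} dt`. -/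
noncomputable def stdNormalCDF (x : ℝ) : ℝ :=
  ∫ t in Set.Iic x, (Real.sqrt (2 * Real.pi))⁻¹ * Real.exp (-t ^ 2 / 2)

lemma gauss_integrable :
    Integrable (fun t : ℝ => (Real.sqrt (2 * Real.pi))⁻¹ * Real.exp (-t ^ 2 / 2)) := by
  have h : (fun t : ℝ => Real.exp (-t ^ 2 / 2)) = fun t : ℝ => Real.exp (-(1/2) * t ^ 2) := by
    funext t; ring_nf
  rw [show (fun t : ℝ => (Real.sqrt (2 * Real.pi))⁻¹ * Real.exp (-t ^ 2 / 2))
      = fun t : ℝ => (Real.sqrt (2 * Real.pi))⁻¹ * Real.exp (-(1/2) * t ^ 2) by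
    funext t; rw [show -t ^ 2 / 2 = -(1/2) * t ^ 2 by ring]]
  exact (integrable_exp_neg_mul_sq (by norm_num : (0:ℝ) < 1/2)).const_mul _

lemma gauss_gap (a b : ℝ) (hab : a ≤ b) (M : ℝ)
    (hM : ∀ t ∈ Set.Icc a b, Real.exp (-t ^ 2 / 2) ≤ M) :
    stdNormalCDF b - stdNormalCDF a ≤ (b - a) * ((Real.sqrt (2 * Real.pi))⁻¹ * M) := by
  have hint := gauss_integrable
  have hsqrt : (0:ℝ) < Real.sqrt (2 * Real.pi) :=
    Real.sqrt_pos.2 (by positivity)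
  have hdiff : stdNormalCDF b - stdNormalCDF a
      = ∫ t in a..b, (Real.sqrt (2 * Real.pi))⁻¹ * Real.exp (-t ^ 2 / 2) := by
    rw [stdNormalCDF, stdNormalCDF]
    exact intervalIntegral.integral_Iic_sub_Iic hint.integrableOn hint.integrableOn
  rw [hdiff]
  have hle : ∫ t in a..b, (Real.sqrt (2 * Real.pi))⁻¹ * Real.exp (-t ^ 2 / 2)
      ≤ ∫ _ in a..b, (Real.sqrt (2 * Real.pi))⁻¹ * M := by
    apply intervalIntegral.integral_mono_on hab
    · exact hint.intervalIntegrable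
    · exact intervalIntegrable_const
    · intro t ht
      exact mul_le_mul_of_nonneg_left (hM t ht) (by positivity)
  calc _ ≤ ∫ _ in a..b, (Real.sqrt (2 * Real.pi))⁻¹ * M := hle
    _ = (b - a) * ((Real.sqrt (2 * Real.pi))⁻¹ * M) := by
        rw [intervalIntegral.integral_const, smul_eq_mul]

lemma t_exp_le (t : ℝ) (ht : 0 ≤ t) : t * Real.exp (-t ^ 2 / 2) ≤ Real.exp (-(1:ℝ)/2) := by
  have h1 : t ≤ Real.exp ((t ^ 2 - 1) / 2) := by
    have := Real.add_one_le_exp ((t ^ 2 - 1) / 2)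
    nlinarith [sq_nonneg (t - 1)]
  calc t * Real.exp (-t ^ 2 / 2) ≤ Real.exp ((t ^ 2 - 1) / 2) * Real.exp (-t ^ 2 / 2) :=
        mul_le_mul_of_nonneg_right h1 (Real.exp_pos _).le
    _ = Real.exp (-(1:ℝ)/2) := by rw [← Real.exp_add]; congr 1; ring

/-- Key bound: the constant `2δ/√(2πe)` written in a convenient form. -/
lemma kappa_eq (δ : ℝ) : 2 * δ / Real.sqrt (2 * Real.pi * Real.exp 1)
    = 2 * δ * ((Real.sqrt (2 * Real.pi))⁻¹ * Real.exp (-(1:ℝ)/2)) := by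
  have h2π : (0:ℝ) ≤ 2 * Real.pi := by positivity
  rw [Real.sqrt_mul h2π, div_eq_mul_inv, mul_inv]
  have he : (Real.sqrt (Real.exp 1))⁻¹ = Real.exp (-(1:ℝ)/2) := by
    rw [← Real.exp_half, ← Real.exp_neg]; norm_num
  rw [he]

lemma gauss_gap_A (δ x : ℝ) (hδ0 : 0 < δ) (hδ : δ < 1/2) :
    stdNormalCDF (x + |x| * δ) - stdNormalCDF x
      ≤ 2 * δ / Real.sqrt (2 * Real.pi * Real.exp 1) := by
  rw [kappa_eq]
  have hle : x ≤ x + |x| * δ := by nlinarith [abs_nonneg x]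
  rcases le_or_gt 0 x with hx | hx
  · -- on [x, x+xδ], exp(-t²/2) ≤ exp(-x²/2)
    have := gauss_gap x (x + |x| * δ) hle (Real.exp (-x ^ 2 / 2)) (fun t ht => by
      apply Real.exp_le_exp.2
      have h1 : x ≤ t := ht.1
      nlinarith)
    have hb : (x + |x| * δ - x) * ((Real.sqrt (2 * Real.pi))⁻¹ * Real.exp (-x ^ 2 / 2))
        ≤ 2 * δ * ((Real.sqrt (2 * Real.pi))⁻¹ * Real.exp (-(1:ℝ)/2)) := by
      rw [abs_of_nonneg hx]
      have h2 := t_exp_le x hx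
      have hs : (0:ℝ) < (Real.sqrt (2 * Real.pi))⁻¹ := by positivity
      calc (x + x * δ - x) * ((Real.sqrt (2 * Real.pi))⁻¹ * Real.exp (-x ^ 2 / 2))
          = δ * ((Real.sqrt (2 * Real.pi))⁻¹ * (x * Real.exp (-x ^ 2 / 2))) := by ring
        _ ≤ δ * ((Real.sqrt (2 * Real.pi))⁻¹ * Real.exp (-(1:ℝ)/2)) := by
            apply mul_le_mul_of_nonneg_left _ hδ0.le
            exact mul_le_mul_of_nonneg_left h2 hs.le
        _ ≤ 2 * δ * ((Real.sqrt (2 * Real.pi))⁻¹ * Real.exp (-(1:ℝ)/2)) := by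
            have : (0:ℝ) ≤ (Real.sqrt (2 * Real.pi))⁻¹ * Real.exp (-(1:ℝ)/2) := by positivity
            nlinarith
    linarith
  · -- x < 0 : b = x(1-δ) < 0, density max at b
    have hb0 : x + |x| * δ = x * (1 - δ) := by rw [abs_of_neg hx]; ring
    have hbneg : x * (1 - δ) < 0 := mul_neg_of_neg_of_pos hx (by linarith)
    have := gauss_gap x (x + |x| * δ) hle (Real.exp (-(x * (1 - δ)) ^ 2 / 2)) (fun t ht => by
      apply Real.exp_le_exp.2
      have h2 : t ≤ x * (1 - δ) := by rw [← hb0]; exact ht.2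
      nlinarith)
    have key := t_exp_le (-(x * (1 - δ))) (by linarith)
    have hs : (0:ℝ) < (Real.sqrt (2 * Real.pi))⁻¹ := by positivity
    have hE : (0:ℝ) < Real.exp (-(x * (1 - δ)) ^ 2 / 2) := Real.exp_pos _
    have hb : (x + |x| * δ - x) * ((Real.sqrt (2 * Real.pi))⁻¹
          * Real.exp (-(x * (1 - δ)) ^ 2 / 2))
        ≤ 2 * δ * ((Real.sqrt (2 * Real.pi))⁻¹ * Real.exp (-(1:ℝ)/2)) := by
      rw [abs_of_neg hx]
      have hkey : (-(x * (1 - δ))) * Real.exp (-(x * (1 - δ)) ^ 2 / 2)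
          ≤ Real.exp (-(1:ℝ)/2) := by
        have : (-(x * (1 - δ))) ^ 2 = (x * (1 - δ)) ^ 2 := by ring
        rw [← this]; exact key
      -- (-x δ) * c * E where -xδ = δ/(1-δ) * (-(x(1-δ)))
      have h1δ : (0:ℝ) < 1 - δ := by linarith
      have step : (-x * δ) * Real.exp (-(x * (1 - δ)) ^ 2 / 2)
          ≤ 2 * δ * Real.exp (-(1:ℝ)/2) := by
        have e1 : (-x * δ) * Real.exp (-(x * (1 - δ)) ^ 2 / 2)
            = (δ / (1 - δ)) * ((-(x * (1 - δ))) * Real.exp (-(x * (1 - δ)) ^ 2 / 2)) := by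
          field_simp
        rw [e1]
        have h2 : δ / (1 - δ) ≤ 2 * δ := by
          rw [div_le_iff₀ h1δ]; nlinarith
        have h3 : (0:ℝ) ≤ (-(x * (1 - δ))) * Real.exp (-(x * (1 - δ)) ^ 2 / 2) := by
          apply mul_nonneg (by linarith) hE.le
        calc (δ / (1 - δ)) * ((-(x * (1 - δ))) * Real.exp (-(x * (1 - δ)) ^ 2 / 2))
            ≤ (δ / (1 - δ)) * Real.exp (-(1:ℝ)/2) := by
              apply mul_le_mul_of_nonneg_left hkey (by positivity)
          _ ≤ 2 * δ * Real.exp (-(1:ℝ)/2) :=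
              mul_le_mul_of_nonneg_right h2 (Real.exp_pos _).le
      calc (x + -x * δ - x) * ((Real.sqrt (2 * Real.pi))⁻¹
            * Real.exp (-(x * (1 - δ)) ^ 2 / 2))
          = (Real.sqrt (2 * Real.pi))⁻¹ * ((-x * δ) * Real.exp (-(x * (1 - δ)) ^ 2 / 2)) := by
            ring
        _ ≤ (Real.sqrt (2 * Real.pi))⁻¹ * (2 * δ * Real.exp (-(1:ℝ)/2)) :=
            mul_le_mul_of_nonneg_left step hs.le
        _ = 2 * δ * ((Real.sqrt (2 * Real.pi))⁻¹ * Real.exp (-(1:ℝ)/2)) := by ring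
    linarith

lemma gauss_gap_B (δ x : ℝ) (hδ0 : 0 < δ) (hδ : δ < 1/2) :
    stdNormalCDF x - stdNormalCDF (x - |x| * δ)
      ≤ 2 * δ / Real.sqrt (2 * Real.pi * Real.exp 1) := by
  rw [kappa_eq]
  have hle : x - |x| * δ ≤ x := by nlinarith [abs_nonneg x]
  rcases le_or_gt 0 x with hx | hx
  · -- a = x(1-δ) ≥ 0, density max at a
    have ha0 : x - |x| * δ = x * (1 - δ) := by rw [abs_of_nonneg hx]; ring
    have hapos : 0 ≤ x * (1 - δ) := mul_nonneg hx (by linarith)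
    have := gauss_gap (x - |x| * δ) x hle (Real.exp (-(x * (1 - δ)) ^ 2 / 2)) (fun t ht => by
      apply Real.exp_le_exp.2
      have h1 : x * (1 - δ) ≤ t := by rw [← ha0]; exact ht.1
      nlinarith)
    have key := t_exp_le (x * (1 - δ)) hapos
    have hs : (0:ℝ) < (Real.sqrt (2 * Real.pi))⁻¹ := by positivity
    have h1δ : (0:ℝ) < 1 - δ := by linarith
    have hb : (x - (x - |x| * δ)) * ((Real.sqrt (2 * Real.pi))⁻¹
          * Real.exp (-(x * (1 - δ)) ^ 2 / 2))
        ≤ 2 * δ * ((Real.sqrt (2 * Real.pi))⁻¹ * Real.exp (-(1:ℝ)/2)) := by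
      rw [abs_of_nonneg hx]
      have step : (x * δ) * Real.exp (-(x * (1 - δ)) ^ 2 / 2)
          ≤ 2 * δ * Real.exp (-(1:ℝ)/2) := by
        have e1 : (x * δ) * Real.exp (-(x * (1 - δ)) ^ 2 / 2)
            = (δ / (1 - δ)) * ((x * (1 - δ)) * Real.exp (-(x * (1 - δ)) ^ 2 / 2)) := by
          field_simp
        rw [e1]
        have h2 : δ / (1 - δ) ≤ 2 * δ := by rw [div_le_iff₀ h1δ]; nlinarith
        calc (δ / (1 - δ)) * ((x * (1 - δ)) * Real.exp (-(x * (1 - δ)) ^ 2 / 2))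
            ≤ (δ / (1 - δ)) * Real.exp (-(1:ℝ)/2) :=
              mul_le_mul_of_nonneg_left key (by positivity)
          _ ≤ 2 * δ * Real.exp (-(1:ℝ)/2) :=
              mul_le_mul_of_nonneg_right h2 (Real.exp_pos _).le
      calc (x - (x - x * δ)) * ((Real.sqrt (2 * Real.pi))⁻¹
            * Real.exp (-(x * (1 - δ)) ^ 2 / 2))
          = (Real.sqrt (2 * Real.pi))⁻¹ * ((x * δ) * Real.exp (-(x * (1 - δ)) ^ 2 / 2)) := by
            ring
        _ ≤ (Real.sqrt (2 * Real.pi))⁻¹ * (2 * δ * Real.exp (-(1:ℝ)/2)) :=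
            mul_le_mul_of_nonneg_left step hs.le
        _ = 2 * δ * ((Real.sqrt (2 * Real.pi))⁻¹ * Real.exp (-(1:ℝ)/2)) := by ring
    linarith
  · -- x < 0 : interval [x(1+δ), x], density max at x
    have := gauss_gap (x - |x| * δ) x hle (Real.exp (-x ^ 2 / 2)) (fun t ht => by
      apply Real.exp_le_exp.2
      have h2 : t ≤ x := ht.2
      have h3 : t < 0 := lt_of_le_of_lt h2 hx
      nlinarith)
    have key := t_exp_le (-x) (by linarith)
    have hs : (0:ℝ) < (Real.sqrt (2 * Real.pi))⁻¹ := by positivity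
    have hb : (x - (x - |x| * δ)) * ((Real.sqrt (2 * Real.pi))⁻¹ * Real.exp (-x ^ 2 / 2))
        ≤ 2 * δ * ((Real.sqrt (2 * Real.pi))⁻¹ * Real.exp (-(1:ℝ)/2)) := by
      rw [abs_of_neg hx]
      have hkey : (-x) * Real.exp (-x ^ 2 / 2) ≤ Real.exp (-(1:ℝ)/2) := by
        have : (-x) ^ 2 = x ^ 2 := by ring
        rw [← this]; exact key
      have hpos : (0:ℝ) ≤ (Real.sqrt (2 * Real.pi))⁻¹ * Real.exp (-(1:ℝ)/2) := by positivity
      calc (x - (x - -x * δ)) * ((Real.sqrt (2 * Real.pi))⁻¹ * Real.exp (-x ^ 2 / 2))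
          = δ * ((Real.sqrt (2 * Real.pi))⁻¹ * ((-x) * Real.exp (-x ^ 2 / 2))) := by ring
        _ ≤ δ * ((Real.sqrt (2 * Real.pi))⁻¹ * Real.exp (-(1:ℝ)/2)) := by
            apply mul_le_mul_of_nonneg_left _ hδ0.le
            exact mul_le_mul_of_nonneg_left hkey hs.le
        _ ≤ 2 * δ * ((Real.sqrt (2 * Real.pi))⁻¹ * Real.exp (-(1:ℝ)/2)) := by nlinarith
    linarith

/-- **Stability of a normal approximation under random rescaling.** Let `S` and `R` be
real random variables on a common probability space with `P(R > 0) = 1`, let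
`0 < δ < 1/2` and `ε, η ≥ 0`. If `sup_x |P(S < x) - Φ(x)| ≤ ε` and `P(|R - 1| ≥ δ) ≤ η`,
then `sup_x |P(S/R < x) - Φ(x)| ≤ ε + 2δ/√(2πe) + 2η`. -/
theorem normal_approx_of_ratio
    {Ω : Type*} [MeasurableSpace Ω] (μ : Measure Ω) [IsProbabilityMeasure μ]
    (S R : Ω → ℝ) (hS : Measurable S) (hR : Measurable R)
    (hRpos : μ {ω | 0 < R ω} = 1)
    (δ : ℝ) (hδ0 : 0 < δ) (hδ : δ < 1 / 2)
    (ε η : ℝ) (hε : 0 ≤ ε) (hη : 0 ≤ η)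
    (hSapprox : ∀ x : ℝ, |(μ {ω | S ω < x}).toReal - stdNormalCDF x| ≤ ε)
    (hRconc : (μ {ω | δ ≤ |R ω - 1|}).toReal ≤ η) :
    ∀ x : ℝ, |(μ {ω | S ω / R ω < x}).toReal - stdNormalCDF x|
      ≤ ε + 2 * δ / Real.sqrt (2 * Real.pi * Real.exp 1) + 2 * η := by
  intro x
  set κ := 2 * δ / Real.sqrt (2 * Real.pi * Real.exp 1) with hκ
  -- the bad sets
  have hNmeas : MeasurableSet {ω | 0 < R ω} := measurableSet_lt measurable_const hR
  have hnull : μ {ω | ¬ 0 < R ω} = 0 := by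
    have := measure_compl hNmeas (measure_ne_top μ _)
    rw [hRpos, measure_univ] at this
    simpa [Set.compl_setOf] using this
  set C := {ω | δ ≤ |R ω - 1|} with hC
  -- upper inclusion
  have hsub1 : {ω | S ω / R ω < x} ⊆ {ω | S ω < x + |x| * δ} ∪ C ∪ {ω | ¬ 0 < R ω} := by
    intro ω hω
    by_cases hr : 0 < R ω
    · by_cases hc : δ ≤ |R ω - 1|
      · exact Or.inl (Or.inr hc)
      · left; left
        push_neg at hc
        have h1 : S ω < x * R ω := (div_lt_iff₀ hr).1 hω
        have h2 : x * R ω ≤ x + |x| * δ := by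
          have : x * R ω - x = x * (R ω - 1) := by ring
          have h3 : x * (R ω - 1) ≤ |x| * |R ω - 1| := by
            calc x * (R ω - 1) ≤ |x * (R ω - 1)| := le_abs_self _
              _ = |x| * |R ω - 1| := abs_mul _ _
          nlinarith [abs_nonneg x]
        exact lt_of_lt_of_le h1 h2
    · exact Or.inr hr
  -- lower inclusion
  have hsub2 : {ω | S ω < x - |x| * δ} ⊆ {ω | S ω / R ω < x} ∪ C ∪ {ω | ¬ 0 < R ω} := by
    intro ω hω
    by_cases hr : 0 < R ω
    · by_cases hc : δ ≤ |R ω - 1|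
      · exact Or.inl (Or.inr hc)
      · left; left
        push_neg at hc
        have h2 : x - |x| * δ ≤ x * R ω := by
          have h3 : x * (1 - R ω) ≤ |x| * |R ω - 1| := by
            calc x * (1 - R ω) ≤ |x * (1 - R ω)| := le_abs_self _
              _ = |x| * |1 - R ω| := abs_mul _ _
              _ = |x| * |R ω - 1| := by rw [abs_sub_comm]
          nlinarith [abs_nonneg x]
        have h1 : S ω < x * R ω := lt_of_lt_of_le hω h2
        exact (div_lt_iff₀ hr).2 h1
    · exact Or.inr hr
  -- convert to real inequalities
  have toRealmono : ∀ (A B : Set Ω), A ⊆ B ∪ C ∪ {ω | ¬ 0 < R ω} →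
      (μ A).toReal ≤ (μ B).toReal + (μ C).toReal := by
    intro A B hAB
    have h1 : μ A ≤ μ B + μ C := by
      calc μ A ≤ μ (B ∪ C ∪ {ω | ¬ 0 < R ω}) := measure_mono hAB
        _ ≤ μ (B ∪ C) + μ {ω | ¬ 0 < R ω} := measure_union_le _ _
        _ = μ (B ∪ C) := by rw [hnull, add_zero]
        _ ≤ μ B + μ C := measure_union_le _ _
    have h2 : (μ B + μ C) ≠ ⊤ := by
      exact ENNReal.add_ne_top.2 ⟨measure_ne_top μ _, measure_ne_top μ _⟩
    calc (μ A).toReal ≤ (μ B + μ C).toReal := ENNReal.toReal_mono h2 h1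
      _ = (μ B).toReal + (μ C).toReal :=
        ENNReal.toReal_add (measure_ne_top μ _) (measure_ne_top μ _)
  have hup : (μ {ω | S ω / R ω < x}).toReal
      ≤ (μ {ω | S ω < x + |x| * δ}).toReal + η :=
    le_trans (toRealmono _ _ hsub1) (by linarith)
  have hlow : (μ {ω | S ω < x - |x| * δ}).toReal
      ≤ (μ {ω | S ω / R ω < x}).toReal + η :=
    le_trans (toRealmono _ _ hsub2) (by linarith)
  have hSup := hSapprox (x + |x| * δ)
  have hSlow := hSapprox (x - |x| * δ)
  have hgapA := gauss_gap_A δ x hδ0 hδ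
  have hgapB := gauss_gap_B δ x hδ0 hδ
  rw [abs_le] at hSup hSlow ⊢
  constructor
  · -- lower bound: -(ε+κ+2η) ≤ P - Φ
    have : stdNormalCDF (x - |x| * δ) - ε ≤ (μ {ω | S ω < x - |x| * δ}).toReal := by
      linarith [hSlow.1]
    linarith [hSlow.1, hgapB]
  · linarith [hSup.2, hgapA]
end

section
/- Let c ≠ 0 be a fixed real constant and for each positive integer T set ρ_T = 1 − c/T. Then, as T→∞ (along T large enough that ρ_T² ≠ 1), (1/(T²(1 − ρ_T²))) · ( T − (1 − ρ_T^{2T})/(1 − ρ_T²) ) converges to (2c − 1 + e^{−2c})/(4c²). -/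
/-!
With `a_T = T (1 - ρ_T²)` the expression equals `a_T⁻¹ (1 - (1 - ρ_T^{2T}) / a_T)`.
Since `a_T = 2c - c²/T → 2c ≠ 0` and `ρ_T^{2T} = ((1 - c/T)^T)² → e^{-2c}`, the limit is
`(2c)⁻¹ (1 - (1 - e^{-2c}) / (2c)) = (2c - 1 + e^{-2c}) / (4c²)`.
-/

open Filter Topology

-- No side conditions: with `x / 0 = 0` both sides vanish when `T = 0` or `y = 0`.
theorem one_div_sq_mul_mul_sub_div {K : Type*} [Field K] (T y p : K) :
    1 / (T ^ 2 * y) * (T - (1 - p) / y) = 1 / (T * y) * (1 - (1 - p) / (T * y)) := by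
  rcases eq_or_ne T 0 with rfl | hT
  · simp
  · have hT' : T * T⁻¹ ^ 2 = T⁻¹ := by rw [sq, ← mul_assoc, mul_inv_cancel₀ hT, one_mul]
    ring_nf
    rw [hT']

theorem tendsto_nat_mul_one_sub_one_sub_div_sq (c : ℝ) :
    Tendsto (fun T : ℕ => (T : ℝ) * (1 - (1 - c / T) ^ 2)) atTop (𝓝 (2 * c)) := by
  have h : Tendsto (fun T : ℕ => 2 * c - c ^ 2 / T) atTop (𝓝 (2 * c - 0)) :=
    tendsto_const_nhds.sub (tendsto_const_div_atTop_nhds_zero_nat (c ^ 2))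
  rw [sub_zero] at h
  refine h.congr' ?_
  filter_upwards [eventually_ne_atTop 0] with T hT
  have hT' : (T : ℝ) ≠ 0 := Nat.cast_ne_zero.mpr hT
  field_simp
  ring

theorem tendsto_one_sub_div_pow_two_mul (c : ℝ) :
    Tendsto (fun T : ℕ => (1 - c / T) ^ (2 * T)) atTop (𝓝 (Real.exp (-2 * c))) := by
  have h := (Real.tendsto_one_add_div_pow_exp (-c)).pow 2
  rw [← Real.exp_nat_mul, show ((2 : ℕ) : ℝ) * -c = -2 * c by push_cast; ring] at h
  refine h.congr fun T => ?_
  rw [mul_comm 2 T, pow_mul, neg_div, ← sub_eq_add_neg]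

/-- **Deterministic limit of the normalized second moment in the nearly non-stationary
AR(1) model.** Let `c ≠ 0` and `ρ_T = 1 - c/T`. Then, as `T → ∞`,
`(1/(T²(1 - ρ_T²))) (T - (1 - ρ_T^{2T})/(1 - ρ_T²))` converges to
`(2c - 1 + e^{-2c})/(4c²)`. -/
theorem nearly_nonstationary_second_moment_limit
    (c : ℝ) (hc : c ≠ 0) (ρ : ℕ → ℝ) (hρ : ∀ T : ℕ, ρ T = 1 - c / T) :
    Tendsto
      (fun T : ℕ =>
        1 / ((T : ℝ) ^ 2 * (1 - ρ T ^ 2)) *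
          ((T : ℝ) - (1 - ρ T ^ (2 * T)) / (1 - ρ T ^ 2)))
      Filter.atTop
      (𝓝 ((2 * c - 1 + Real.exp (-2 * c)) / (4 * c ^ 2))) := by
  obtain rfl : ρ = fun T : ℕ => 1 - c / T := funext hρ
  simp only [one_div_sq_mul_mul_sub_div]
  have h2c : 2 * c ≠ 0 := mul_ne_zero two_ne_zero hc
  have hlim := tendsto_nat_mul_one_sub_one_sub_div_sq c
  have hval : 1 / (2 * c) * (1 - (1 - Real.exp (-2 * c)) / (2 * c))
      = (2 * c - 1 + Real.exp (-2 * c)) / (4 * c ^ 2) := by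
    field_simp
    ring
  rw [← hval]
  exact (tendsto_const_nhds.div hlim h2c).mul <| tendsto_const_nhds.sub <|
    (tendsto_const_nhds.sub (tendsto_one_sub_div_pow_two_mul c)).div hlim h2c
end
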